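/- Consider the finite-horizon dynamic Cournot game with N firms and decoupled state feedback: firm i's state evolves as x^i_{t+1} = x^i_t + u^i_t with fixed initial state x^i_0 ∈ ℝ, and its decision variable is k^i = (k^i_0,…,k^i_{t_f−1}) ∈ ℝ^{t_f} with u^i_t = −k^i_t x^i_t. Firm i's loss is J^i(k) = Q^i_{t_f} (x^i_{t_f})² + Σ_{t=0}^{t_f−1} ( Σ_{j=1}^N Σ_{h=1}^N u^j_t (R^i_t)_{jh} u^h_t + M_t u^i_t ), where (R^i_t)_{ji} = (R^i_t)_{ij} = α_t > 0 for all j, (R^i_t)_{jh} = 0 for j ≠ i and h ≠ i, Q^i_{t_f} > 0, and M_t ≥ 0. Then this game is an exact potential game. -/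

import Mathlib

/-!
STATEMENT 10: The finite-horizon dynamic Cournot game with `N` firms and decoupled state
feedback (`xⁱ_{t+1} = xⁱ_t + uⁱ_t`, `uⁱ_t = −kⁱ_t xⁱ_t`) is an exact potential game, where
firm `i`'s loss is `Jⁱ(k) = Qⁱ_{t_f} (xⁱ_{t_f})² + Σ_t (Σ_j Σ_h uʲ_t (Rⁱ_t)_{jh} uʰ_t + M_t uⁱ_t)`
with `(Rⁱ_t)_{ji} = (Rⁱ_t)_{ij} = α_t > 0` for all `j`, `(Rⁱ_t)_{jh} = 0` for `j ≠ i`,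
`h ≠ i`, `Qⁱ_{t_f} > 0` and `M_t ≥ 0`.
-/

/-- Scalar Cournot state trajectory: `x_{t+1} = x_t + u_t` where `u_t = -k_t x_t`. -/
noncomputable def ctraj (x0i : ℝ) (tf : ℕ) (ki : Fin tf → ℝ) : ℕ → ℝ
  | 0 => x0i
  | t + 1 =>
      ctraj x0i tf ki t + -((if h : t < tf then ki ⟨t, h⟩ else 0) * ctraj x0i tf ki t)

/-- Cournot production of firm `i` at time `t`: `uⁱ_t = -kⁱ_t xⁱ_t`. -/
noncomputable def cact (x0i : ℝ) (tf : ℕ) (ki : Fin tf → ℝ) (t : Fin tf) : ℝ :=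
  -(ki t * ctraj x0i tf ki (t : ℕ))

/-- Loss of firm `i` in the dynamic Cournot game with decoupled state feedback. -/
noncomputable def cournotLoss (N tf : ℕ) (x0 : Fin N → ℝ) (Qf : Fin N → ℝ)
    (R : Fin N → Fin tf → Matrix (Fin N) (Fin N) ℝ) (M : Fin tf → ℝ)
    (i : Fin N) (k : Fin N → Fin tf → ℝ) : ℝ :=
  Qf i * (ctraj (x0 i) tf (k i) tf) ^ 2 +
    ∑ t : Fin tf,
      ((∑ j, ∑ h, cact (x0 j) tf (k j) t * R i t j h * cact (x0 h) tf (k h) t) +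
        M t * cact (x0 i) tf (k i) t)

lemma sumR {N : ℕ} (i : Fin N) (a : ℝ) (Rm : Matrix (Fin N) (Fin N) ℝ)
    (hcol : ∀ j, Rm j i = a) (hrow : ∀ j, Rm i j = a)
    (hz : ∀ j h, j ≠ i → h ≠ i → Rm j h = 0) (u : Fin N → ℝ) :
    ∑ j, ∑ h, u j * Rm j h * u h
      = 2 * a * u i * (∑ j, u j) - a * u i ^ 2 := by
  have hR : ∀ j h, Rm j h = (if j = i then a else 0) + (if h = i then a else 0)
      - (if j = i then (if h = i then a else 0) else 0) := by
    intro j h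
    rcases eq_or_ne j i with hj | hj
    · rcases eq_or_ne h i with hh | hh <;> simp [hj, hh, hcol, hrow]
    · rcases eq_or_ne h i with hh | hh
      · simp [hj, hh, hcol]
      · simp [hj, hh, hz j h hj hh]
  simp_rw [hR]
  simp [mul_sub, mul_add, sub_mul, add_mul, mul_ite, ite_mul, mul_zero, zero_mul,
    Finset.sum_sub_distrib, Finset.sum_add_distrib, Finset.sum_ite_eq', Finset.mul_sum,
    Finset.sum_mul]
  ring_nf
  rw [Finset.sum_mul]

lemma potential_algebra (n : ℕ) (α M b w S : Fin n → ℝ) (c c' T : ℝ) :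
    (c' + ∑ t, (2 * α t * b t * (b t + (S t - w t)) - α t * b t ^ 2 + M t * b t))
      - (c + ∑ t, (2 * α t * w t * S t - α t * w t ^ 2 + M t * w t))
    = (c' + (T - c) + ∑ t, (α t * (b t + (S t - w t)) ^ 2 + M t * (b t + (S t - w t))))
      - (T + ∑ t, (α t * S t ^ 2 + M t * S t)) := by
  have hsum : (∑ t, (2 * α t * b t * (b t + (S t - w t)) - α t * b t ^ 2 + M t * b t))
        - (∑ t, (2 * α t * w t * S t - α t * w t ^ 2 + M t * w t))
      = (∑ t, (α t * (b t + (S t - w t)) ^ 2 + M t * (b t + (S t - w t))))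
        - (∑ t, (α t * S t ^ 2 + M t * S t)) := by
    rw [← Finset.sum_sub_distrib, ← Finset.sum_sub_distrib]
    exact Finset.sum_congr rfl fun t _ => by ring
  linear_combination hsum

theorem cournot_feedback_is_potential
    (N tf : ℕ) (hN : 1 ≤ N) (htf : 1 ≤ tf)
    (x0 : Fin N → ℝ)
    (α : Fin tf → ℝ) (hα : ∀ t, 0 < α t)
    (M : Fin tf → ℝ) (hM : ∀ t, 0 ≤ M t)
    (Qf : Fin N → ℝ) (hQf : ∀ i, 0 < Qf i)
    (R : Fin N → Fin tf → Matrix (Fin N) (Fin N) ℝ)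
    (hRcol : ∀ i t j, R i t j i = α t)
    (hRrow : ∀ i t j, R i t i j = α t)
    (hRzero : ∀ i t j h, j ≠ i → h ≠ i → R i t j h = 0) :
    ∃ P : (Fin N → Fin tf → ℝ) → ℝ,
      ∀ (i : Fin N) (k : Fin N → Fin tf → ℝ) (ki' : Fin tf → ℝ),
        cournotLoss N tf x0 Qf R M i (Function.update k i ki') -
            cournotLoss N tf x0 Qf R M i k =
          P (Function.update k i ki') - P k := by
  classical
  refine ⟨fun k => (∑ j, Qf j * (ctraj (x0 j) tf (k j) tf) ^ 2) +
      ∑ t : Fin tf, (α t * (∑ j, cact (x0 j) tf (k j) t) ^ 2 +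
        M t * (∑ j, cact (x0 j) tf (k j) t)), ?_⟩
  intro i k ki'
  have hcact : ∀ (t : Fin tf) (j : Fin N),
      cact (x0 j) tf (Function.update k i ki' j) t
        = Function.update (fun j => cact (x0 j) tf (k j) t) i (cact (x0 i) tf ki' t) j := by
    intro t j
    rcases eq_or_ne j i with rfl | hj
    · simp
    · simp [Function.update_of_ne hj]
  have key : ∀ (v : Fin N → ℝ) (bi : ℝ),
      ∑ j, Function.update v i bi j = bi + ((∑ j, v j) - v i) := by
    intro v bi
    rw [Finset.sum_update_of_mem (Finset.mem_univ i),
      Finset.sum_eq_add_sum_sdiff_singleton_of_mem (Finset.mem_univ i) v]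
    ring
  have hQ : ∀ j, Qf j * (ctraj (x0 j) tf (Function.update k i ki' j) tf) ^ 2
      = Function.update (fun j => Qf j * (ctraj (x0 j) tf (k j) tf) ^ 2) i
          (Qf i * (ctraj (x0 i) tf ki' tf) ^ 2) j := by
    intro j
    rcases eq_or_ne j i with rfl | hj
    · simp
    · simp [Function.update_of_ne hj]
  have h1 : cournotLoss N tf x0 Qf R M i (Function.update k i ki')
      = Qf i * (ctraj (x0 i) tf ki' tf) ^ 2
        + ∑ t : Fin tf, (2 * α t * cact (x0 i) tf ki' t *
            (cact (x0 i) tf ki' t + ((∑ j, cact (x0 j) tf (k j) t) - cact (x0 i) tf (k i) t))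
          - α t * (cact (x0 i) tf ki' t) ^ 2 + M t * cact (x0 i) tf ki' t) := by
    unfold cournotLoss
    simp only [Function.update_self]
    congr 1
    refine Finset.sum_congr rfl fun t _ => ?_
    simp_rw [hcact t]
    rw [sumR i (α t) (R i t) (fun j => hRcol i t j) (fun j => hRrow i t j)
      (fun j h => hRzero i t j h), key, Function.update_self]
  have h2 : cournotLoss N tf x0 Qf R M i k
      = Qf i * (ctraj (x0 i) tf (k i) tf) ^ 2
        + ∑ t : Fin tf, (2 * α t * cact (x0 i) tf (k i) t * (∑ j, cact (x0 j) tf (k j) t)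
          - α t * (cact (x0 i) tf (k i) t) ^ 2 + M t * cact (x0 i) tf (k i) t) := by
    unfold cournotLoss
    congr 1
    refine Finset.sum_congr rfl fun t _ => ?_
    rw [sumR i (α t) (R i t) (fun j => hRcol i t j) (fun j => hRrow i t j)
      (fun j h => hRzero i t j h)]
  have h3 : ((∑ j, Qf j * (ctraj (x0 j) tf (Function.update k i ki' j) tf) ^ 2) +
      ∑ t : Fin tf, (α t * (∑ j, cact (x0 j) tf (Function.update k i ki' j) t) ^ 2 +
        M t * (∑ j, cact (x0 j) tf (Function.update k i ki' j) t)))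
      = Qf i * (ctraj (x0 i) tf ki' tf) ^ 2
        + ((∑ j, Qf j * (ctraj (x0 j) tf (k j) tf) ^ 2)
            - Qf i * (ctraj (x0 i) tf (k i) tf) ^ 2)
        + ∑ t : Fin tf,
            (α t * (cact (x0 i) tf ki' t +
              ((∑ j, cact (x0 j) tf (k j) t) - cact (x0 i) tf (k i) t)) ^ 2 +
            M t * (cact (x0 i) tf ki' t +
              ((∑ j, cact (x0 j) tf (k j) t) - cact (x0 i) tf (k i) t))) := by
    simp_rw [hQ, hcact, key]
  dsimp only
  rw [h1, h2, h3]
  exact potential_algebra tf α M _ _ _ _ _ _
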